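/- arXiv:2303.13231 — 4 statements merged into one kernel-verified Lean document; each statement's English description precedes it below -/
import Mathlib

section
/- Let Ω be a probability space with probability measure μ, and let X, Y, Z be random variables on Ω taking values in finite (measurable, discrete) types. If the conditional Shannon entropy of X given the pair (Z, Y) is zero, i.e. H[X | ⟨Z, Y⟩; μ] = 0, and X is independent of Y under μ, then the conditional entropy of Z given Y is at least the entropy of X: H[Z | Y; μ] ≥ H[X; μ]. -/
open MeasureTheory ProbabilityTheory

/-- Shannon entropy (in nats) of a random variable `X` taking values in a finite type,
under the measure `μ`: `H[X; μ] = ∑ x, -p(x) log p(x)`. -/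
noncomputable def shannonEntropy {Ω S : Type*} [MeasurableSpace Ω] [Fintype S]
    (X : Ω → S) (μ : Measure Ω) : ℝ :=
  ∑ x : S, Real.negMulLog (μ (X ⁻¹' {x})).toReal

/-- Conditional Shannon entropy `H[X | Y; μ] = H[⟨X, Y⟩; μ] - H[Y; μ]` of finite-valued
random variables. -/
noncomputable def condShannonEntropy {Ω S T : Type*} [MeasurableSpace Ω] [Fintype S]
    [Fintype T] (X : Ω → S) (Y : Ω → T) (μ : Measure Ω) : ℝ :=
  shannonEntropy (fun ω => (X ω, Y ω)) μ - shannonEntropy Y μ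

/-!
Chain rule for the pair `(X, (Z, Y))`: since `X` is determined by `(Z, Y)`,
`H[Z, Y] = H[X, Z, Y] ≥ H[X, Y] = H[X] + H[Y]`, the inequality because `(X, Y)` is a function of
`(X, Z, Y)` and the equality by independence. Subtracting `H[Y]` gives `H[Z | Y] ≥ H[X]`.
-/

namespace Real

lemma mul_log_le_mul_log_add {x y : ℝ} (hx : 0 ≤ x) (hy : 0 ≤ y) :
    x * log x ≤ x * log (x + y) := by
  rcases hx.eq_or_lt with rfl | hx
  · simp
  · exact mul_le_mul_of_nonneg_left (log_le_log hx (by linarith)) hx.le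

lemma negMulLog_add_le {x y : ℝ} (hx : 0 ≤ x) (hy : 0 ≤ y) :
    negMulLog (x + y) ≤ negMulLog x + negMulLog y := by
  have hx' := mul_log_le_mul_log_add hx hy
  have hy' := mul_log_le_mul_log_add hy hx
  rw [add_comm y] at hy'
  simp only [negMulLog, neg_mul]
  linarith

lemma negMulLog_sum_le {ι : Type*} (s : Finset ι) (p : ι → ℝ) (hp : ∀ i ∈ s, 0 ≤ p i) :
    negMulLog (∑ i ∈ s, p i) ≤ ∑ i ∈ s, negMulLog (p i) :=
  Finset.le_sum_of_subadditive_on_pred negMulLog (0 ≤ ·) negMulLog_zero.le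
    (fun _ _ => negMulLog_add_le) (fun _ _ => add_nonneg) p hp

end Real

section Entropy

variable {Ω S T : Type*} [MeasurableSpace Ω] {μ : Measure Ω}

lemma shannonEntropy_eq_sum_measureReal [Fintype S] (X : Ω → S) :
    shannonEntropy X μ = ∑ x : S, Real.negMulLog (μ.real (X ⁻¹' {x})) :=
  rfl

variable [MeasurableSpace S] [MeasurableSingletonClass S]

lemma sum_measureReal_preimage_singleton_eq_one [Fintype S] [IsProbabilityMeasure μ]
    {X : Ω → S} (hX : Measurable X) :
    ∑ x : S, μ.real (X ⁻¹' {x}) = 1 := by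
  rw [sum_measureReal_preimage_singleton _ (fun x _ => hX (measurableSet_singleton x))]
  simp

lemma measureReal_preimage_comp_eq_sum_fiber [Fintype S] [DecidableEq T] [IsFiniteMeasure μ]
    {W : Ω → S} (hW : Measurable W) (φ : S → T) (t : T) :
    μ.real ((φ ∘ W) ⁻¹' {t}) = ∑ s ∈ Finset.univ.filter (φ · = t), μ.real (W ⁻¹' {s}) := by
  rw [sum_measureReal_preimage_singleton _ (fun s _ => hW (measurableSet_singleton s))]
  congr 1
  ext ω
  simp

lemma shannonEntropy_comp_le [Fintype S] [Fintype T] [IsFiniteMeasure μ]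
    {W : Ω → S} (hW : Measurable W) (φ : S → T) :
    shannonEntropy (φ ∘ W) μ ≤ shannonEntropy W μ := by
  classical
  simp only [shannonEntropy_eq_sum_measureReal, measureReal_preimage_comp_eq_sum_fiber hW]
  calc ∑ t : T, Real.negMulLog (∑ s ∈ Finset.univ.filter (φ · = t), μ.real (W ⁻¹' {s}))
      ≤ ∑ t : T, ∑ s ∈ Finset.univ.filter (φ · = t), Real.negMulLog (μ.real (W ⁻¹' {s})) :=
        Finset.sum_le_sum fun t _ =>
          Real.negMulLog_sum_le _ _ fun s _ => measureReal_nonneg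
    _ = ∑ s : S, Real.negMulLog (μ.real (W ⁻¹' {s})) :=
        Finset.sum_fiberwise _ _ _

variable [MeasurableSpace T] [MeasurableSingletonClass T]

lemma shannonEntropy_prod_eq_add_of_indepFun [Fintype S] [Fintype T] [IsProbabilityMeasure μ]
    {X : Ω → S} {Y : Ω → T} (hX : Measurable X) (hY : Measurable Y) (hXY : IndepFun X Y μ) :
    shannonEntropy (fun ω => (X ω, Y ω)) μ = shannonEntropy X μ + shannonEntropy Y μ := by
  have hprod (x : S) (y : T) : μ.real ((fun ω => (X ω, Y ω)) ⁻¹' {(x, y)}) =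
      μ.real (X ⁻¹' {x}) * μ.real (Y ⁻¹' {y}) := by
    have hpre : (fun ω => (X ω, Y ω)) ⁻¹' {(x, y)} = X ⁻¹' {x} ∩ Y ⁻¹' {y} := by
      ext ω
      simp [Prod.ext_iff]
    rw [hpre, measureReal_def, hXY.measure_inter_preimage_eq_mul _ _ (measurableSet_singleton x)
      (measurableSet_singleton y), ENNReal.toReal_mul, measureReal_def, measureReal_def]
  simp only [shannonEntropy_eq_sum_measureReal, Fintype.sum_prod_type, hprod,
    Real.negMulLog_mul, Finset.sum_add_distrib, ← Finset.sum_mul, ← Finset.mul_sum,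
    sum_measureReal_preimage_singleton_eq_one hX, sum_measureReal_preimage_singleton_eq_one hY,
    one_mul]

end Entropy

/-- If `X` is determined by `(Z, Y)` (i.e. `H[X | ⟨Z, Y⟩; μ] = 0`) and `X` is independent
of `Y`, then `H[Z | Y; μ] ≥ H[X; μ]`. -/
theorem condEntropy_ge_entropy_of_determined_of_indep
    {Ω S T U : Type*} [MeasurableSpace Ω]
    [Fintype S] [MeasurableSpace S] [MeasurableSingletonClass S]
    [Fintype T] [MeasurableSpace T] [MeasurableSingletonClass T]
    [Fintype U] [MeasurableSpace U] [MeasurableSingletonClass U]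
    (μ : Measure Ω) [IsProbabilityMeasure μ]
    (X : Ω → S) (Y : Ω → T) (Z : Ω → U)
    (hX : Measurable X) (hY : Measurable Y) (hZ : Measurable Z)
    (h0 : condShannonEntropy X (fun ω => (Z ω, Y ω)) μ = 0)
    (hindep : IndepFun X Y μ) :
    shannonEntropy X μ ≤ condShannonEntropy Z Y μ := by
  have hdetermined : shannonEntropy (fun ω => (X ω, (Z ω, Y ω))) μ
      = shannonEntropy (fun ω => (Z ω, Y ω)) μ :=
    sub_eq_zero.mp h0
  have hforget : shannonEntropy (fun ω => (X ω, Y ω)) μ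
      ≤ shannonEntropy (fun ω => (X ω, (Z ω, Y ω))) μ :=
    shannonEntropy_comp_le (hX.prodMk (hZ.prodMk hY)) (fun p => (p.1, p.2.2))
  have hadd := shannonEntropy_prod_eq_add_of_indepFun hX hY hindep
  unfold condShannonEntropy
  linarith
end

section
/- Let Ω be a probability space with probability measure μ, let N, c, q, χ be natural numbers with 1 ≤ c ≤ N and q ≥ 2. Let X be a random variable on Ω uniformly distributed over the c-element subsets of Fin N (i.e., over {S : Finset (Fin N) // S.card = c}), let Y be a random variable with values in a finite type, and let Z be a random variable with values in a finite type of cardinality at most q^χ. If X is independent of Y and H[X | ⟨Z, Y⟩; μ] = 0 (i.e., X is determined by (Z, Y)), then (χ : ℝ) ≥ Real.logb q (Nat.choose N c), i.e., χ · log q ≥ log (N choose c). -/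
open MeasureTheory ProbabilityTheory

/-! Since `X` is independent of `Y` and determined by `(Z, Y)`,
`H(X) + H(Y) = H(X, Y) ≤ H(X, Z, Y) = H(Z, Y) ≤ H(Y) + log |U|`,
the last step being Jensen's inequality for `negMulLog` on each fibre of `(z, y) ↦ y`.
As `X` is uniform, `H(X) = log (N choose c)`, and `|U| ≤ q ^ χ`. -/

namespace Real

lemma negMulLog_inv (x : ℝ) : negMulLog x⁻¹ = x⁻¹ * log x := by
  simp [negMulLog, log_inv]

lemma negMulLog_sum_le_sum_negMulLog {ι : Type*} (s : Finset ι) {f : ι → ℝ}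
    (hf : ∀ i ∈ s, 0 ≤ f i) :
    negMulLog (∑ i ∈ s, f i) ≤ ∑ i ∈ s, negMulLog (f i) := by
  rw [negMulLog, neg_mul, Finset.sum_mul, ← Finset.sum_neg_distrib]
  refine Finset.sum_le_sum fun i hi => ?_
  rcases (hf i hi).eq_or_lt with h | h
  · simp [← h]
  · have := log_le_log h (Finset.single_le_sum hf hi)
    rw [negMulLog]
    nlinarith

lemma sum_negMulLog_le_negMulLog_sum_add {ι : Type*} (s : Finset ι) {f : ι → ℝ}
    (hf : ∀ i ∈ s, 0 ≤ f i) {m : ℕ} (hm : s.card ≤ m) :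
    ∑ i ∈ s, negMulLog (f i) ≤ negMulLog (∑ i ∈ s, f i) + (∑ i ∈ s, f i) * log m := by
  rcases s.eq_empty_or_nonempty with rfl | hs
  · simp
  set n : ℝ := (s.card : ℝ)
  have hn : 0 < n := by simpa [n] using hs.card_pos
  have hjensen := concaveOn_negMulLog.le_map_sum (t := s) (w := fun _ => n⁻¹) (p := f)
    (fun _ _ => by positivity) (by simp [n, hn.ne']) (fun i hi => Set.mem_Ici.2 (hf i hi))
  simp only [smul_eq_mul, ← Finset.mul_sum, negMulLog_mul, negMulLog_inv] at hjensen
  have hlog : log n ≤ log m := log_le_log hn (by simpa [n] using hm)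
  have hsum : 0 ≤ ∑ i ∈ s, f i := Finset.sum_nonneg hf
  calc ∑ i ∈ s, negMulLog (f i)
      ≤ negMulLog (∑ i ∈ s, f i) + (∑ i ∈ s, f i) * log n := by
        have := mul_le_mul_of_nonneg_left hjensen hn.le
        field_simp at this
        linarith
    _ ≤ negMulLog (∑ i ∈ s, f i) + (∑ i ∈ s, f i) * log m := by gcongr

end Real

section Entropy

open Finset

lemma Finset.card_filter_snd_eq {α β : Type*} [Fintype α] [Fintype β] [DecidableEq β] (b : β) :
    #{p : α × β | p.2 = b} = Fintype.card α := by
  rw [show ({p : α × β | p.2 = b} : Finset _) = univ ×ˢ {b} by ext ⟨_, _⟩; simp [eq_comm], card_product,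
    card_singleton, mul_one, card_univ]


variable {Ω S S' : Type*} [MeasurableSpace Ω] {μ : Measure Ω}

lemma shannonEntropy_of_forall_measure_preimage_eq [Fintype S] {V : Ω → S}
    (h : ∀ s, μ (V ⁻¹' {s}) = (Fintype.card S : ENNReal)⁻¹) :
    shannonEntropy V μ = Real.log (Fintype.card S) := by
  simp only [shannonEntropy, h, ENNReal.toReal_inv, ENNReal.toReal_natCast, Real.negMulLog_inv,
    sum_const, card_univ, nsmul_eq_mul]
  rcases Nat.eq_zero_or_pos (Fintype.card S) with h0 | hpos
  · simp [h0]
  · field_simp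

variable [MeasurableSpace S] [MeasurableSingletonClass S] {V : Ω → S}

lemma sum_toReal_measure_preimage_singleton [Fintype S] [IsProbabilityMeasure μ]
    (hV : Measurable V) : ∑ s, (μ (V ⁻¹' {s})).toReal = 1 := by
  rw [← ENNReal.toReal_sum fun _ _ => measure_ne_top μ _,
    sum_measure_preimage_singleton _ fun s _ => hV (measurableSet_singleton s)]
  simp

lemma toReal_measure_preimage_comp_singleton [Fintype S] [DecidableEq S'] [IsFiniteMeasure μ]
    (hV : Measurable V) (g : S → S') (s' : S') :
    (μ ((fun ω => g (V ω)) ⁻¹' {s'})).toReal = ∑ s with g s = s', (μ (V ⁻¹' {s})).toReal := by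
  have hfiber : (fun ω => g (V ω)) ⁻¹' {s'} = V ⁻¹' ↑({s | g s = s'} : Finset S) := by
    ext; simp
  rw [hfiber, ← sum_measure_preimage_singleton _ fun s _ => hV (measurableSet_singleton s),
    ENNReal.toReal_sum fun _ _ => measure_ne_top μ _]

lemma shannonEntropy_comp_le_s1 [Fintype S] [Fintype S'] [IsFiniteMeasure μ]
    (hV : Measurable V) (g : S → S') :
    shannonEntropy (fun ω => g (V ω)) μ ≤ shannonEntropy V μ := by
  classical
  rw [shannonEntropy, shannonEntropy, ← sum_fiberwise univ g]
  refine sum_le_sum fun s' _ => ?_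
  rw [toReal_measure_preimage_comp_singleton hV]
  exact Real.negMulLog_sum_le_sum_negMulLog _ fun _ _ => ENNReal.toReal_nonneg

lemma shannonEntropy_le_comp_add_log [Fintype S] [Fintype S'] [DecidableEq S']
    [IsProbabilityMeasure μ] (hV : Measurable V) (g : S → S') {m : ℕ}
    (hm : ∀ s', #{s | g s = s'} ≤ m) :
    shannonEntropy V μ ≤ shannonEntropy (fun ω => g (V ω)) μ + Real.log m := by
  calc shannonEntropy V μ
      = ∑ s', ∑ s with g s = s', Real.negMulLog (μ (V ⁻¹' {s})).toReal := by
        rw [shannonEntropy, sum_fiberwise]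
    _ ≤ ∑ s', (Real.negMulLog (μ ((fun ω => g (V ω)) ⁻¹' {s'})).toReal
          + (μ ((fun ω => g (V ω)) ⁻¹' {s'})).toReal * Real.log m) := by
        refine sum_le_sum fun s' _ => ?_
        rw [toReal_measure_preimage_comp_singleton hV]
        exact Real.sum_negMulLog_le_negMulLog_sum_add _ (fun _ _ => ENNReal.toReal_nonneg) (hm s')
    _ = shannonEntropy (fun ω => g (V ω)) μ + Real.log m := by
        have htotal : ∑ s', (μ ((fun ω => g (V ω)) ⁻¹' {s'})).toReal = 1 := by
          simp only [toReal_measure_preimage_comp_singleton hV, sum_fiberwise]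
          exact sum_toReal_measure_preimage_singleton hV
        rw [sum_add_distrib, ← sum_mul, htotal, one_mul, shannonEntropy]

lemma shannonEntropy_prod_of_indepFun [Fintype S] [Fintype S'] [MeasurableSpace S']
    [MeasurableSingletonClass S'] [IsProbabilityMeasure μ] {W : Ω → S'}
    (hV : Measurable V) (hW : Measurable W) (hindep : IndepFun V W μ) :
    shannonEntropy (fun ω => (V ω, W ω)) μ = shannonEntropy V μ + shannonEntropy W μ := by
  have hprod : ∀ s s', (μ ((fun ω => (V ω, W ω)) ⁻¹' {(s, s')})).toReal
      = (μ (V ⁻¹' {s})).toReal * (μ (W ⁻¹' {s'})).toReal := by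
    intro s s'
    have hinter : (fun ω => (V ω, W ω)) ⁻¹' {(s, s')} = V ⁻¹' {s} ∩ W ⁻¹' {s'} := by
      ext; simp
    rw [hinter, indepFun_iff_measure_inter_preimage_eq_mul.mp hindep _ _
      (measurableSet_singleton s) (measurableSet_singleton s'), ENNReal.toReal_mul]
  simp only [shannonEntropy, Fintype.sum_prod_type, hprod, Real.negMulLog_mul, sum_add_distrib,
    ← sum_mul, ← mul_sum, sum_toReal_measure_preimage_singleton hV,
    sum_toReal_measure_preimage_singleton hW, one_mul]

end Entropy

theorem comm_overhead_lower_bound_general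
    {Ω T U : Type*} [MeasurableSpace Ω]
    [Fintype T] [MeasurableSpace T] [MeasurableSingletonClass T]
    [Fintype U] [MeasurableSpace U] [MeasurableSingletonClass U]
    (μ : Measure Ω) [IsProbabilityMeasure μ]
    (N c q χ : ℕ) (hq : 2 ≤ q)
    [MeasurableSpace {S : Finset (Fin N) // S.card = c}]
    [MeasurableSingletonClass {S : Finset (Fin N) // S.card = c}]
    (X : Ω → {S : Finset (Fin N) // S.card = c}) (Y : Ω → T) (Z : Ω → U)
    (hX : Measurable X) (hY : Measurable Y) (hZ : Measurable Z)
    (hunif : ∀ x : {S : Finset (Fin N) // S.card = c},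
      μ (X ⁻¹' {x}) = (Fintype.card {S : Finset (Fin N) // S.card = c} : ENNReal)⁻¹)
    (hcard : Fintype.card U ≤ q ^ χ)
    (hindep : IndepFun X Y μ)
    (h0 : condShannonEntropy X (fun ω => (Z ω, Y ω)) μ = 0) :
    (χ : ℝ) ≥ Real.logb q (Nat.choose N c) := by
  classical
  have hHX : shannonEntropy X μ = Real.log (Nat.choose N c) := by
    rw [shannonEntropy_of_forall_measure_preimage_eq hunif, Fintype.card_finset_len,
      Fintype.card_fin]
  have hU : Real.log (Fintype.card U) ≤ χ * Real.log q := by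
    have : Nonempty U := ⟨Z (nonempty_of_isProbabilityMeasure μ).some⟩
    rw [← Real.log_pow]
    exact Real.log_le_log (by exact_mod_cast Fintype.card_pos) (by exact_mod_cast hcard)
  have hmain : Real.log (Nat.choose N c) + shannonEntropy Y μ
      ≤ shannonEntropy Y μ + χ * Real.log q :=
    calc Real.log (Nat.choose N c) + shannonEntropy Y μ
        = shannonEntropy (fun ω => (X ω, Y ω)) μ := by
          rw [shannonEntropy_prod_of_indepFun hX hY hindep, hHX]
      _ ≤ shannonEntropy (fun ω => (X ω, (Z ω, Y ω))) μ :=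
          shannonEntropy_comp_le_s1 (hX.prodMk (hZ.prodMk hY)) fun p => (p.1, p.2.2)
      _ = shannonEntropy (fun ω => (Z ω, Y ω)) μ := sub_eq_zero.mp h0
      _ ≤ shannonEntropy Y μ + Real.log (Fintype.card U) :=
          shannonEntropy_le_comp_add_log (hZ.prodMk hY) Prod.snd fun y => (Finset.card_filter_snd_eq (α := U) y).le
      _ ≤ shannonEntropy Y μ + χ * Real.log q := by gcongr
  have hlogq : 0 < Real.log q := Real.log_pos (by exact_mod_cast hq)
  rw [ge_iff_le, Real.logb, div_le_iff₀ hlogq]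
  linarith

/-- Lower bound on the communication overhead: if `X` is uniformly distributed over the
`c`-element subsets of `Fin N`, `X` is independent of `Y`, `X` is determined by `(Z, Y)`,
and `Z` takes values in a type of cardinality at most `q ^ χ`, then
`χ ≥ log_q (N choose c)`. -/
theorem comm_overhead_lower_bound
    {Ω T U : Type*} [MeasurableSpace Ω]
    [Fintype T] [MeasurableSpace T] [MeasurableSingletonClass T]
    [Fintype U] [MeasurableSpace U] [MeasurableSingletonClass U]
    (μ : Measure Ω) [IsProbabilityMeasure μ]
    (N c q χ : ℕ) (hc1 : 1 ≤ c) (hcN : c ≤ N) (hq : 2 ≤ q)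
    [MeasurableSpace {S : Finset (Fin N) // S.card = c}]
    [MeasurableSingletonClass {S : Finset (Fin N) // S.card = c}]
    (X : Ω → {S : Finset (Fin N) // S.card = c}) (Y : Ω → T) (Z : Ω → U)
    (hX : Measurable X) (hY : Measurable Y) (hZ : Measurable Z)
    (hunif : ∀ x : {S : Finset (Fin N) // S.card = c},
      μ (X ⁻¹' {x}) = (Fintype.card {S : Finset (Fin N) // S.card = c} : ENNReal)⁻¹)
    (hcard : Fintype.card U ≤ q ^ χ)
    (hindep : IndepFun X Y μ)
    (h0 : condShannonEntropy X (fun ω => (Z ω, Y ω)) μ = 0) :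
    (χ : ℝ) ≥ Real.logb q (Nat.choose N c) :=
  comm_overhead_lower_bound_general μ N c q χ hq X Y Z hX hY hZ hunif hcard hindep h0
end

section
/- Let M be an additive commutative monoid, let k ≥ 1 be a natural number, and let a, b : ℕ → M satisfy ∑_{i ∈ Finset.Ico 0 k} a i ≠ ∑_{i ∈ Finset.Ico 0 k} b i. Then there exist T ≤ Nat.clog 2 k and sequences lo, hi : ℕ → ℕ such that: lo 0 = 0 and hi 0 = k; hi T = lo T + 1; for every t < T, setting mid_t = lo t + (hi t - lo t + 1) / 2 (natural-number division, i.e. the midpoint with upper half rounded), either (lo (t+1), hi (t+1)) = (lo t, mid_t) or (lo (t+1), hi (t+1)) = (mid_t, hi t); and for every t ≤ T, ∑_{i ∈ Finset.Ico (lo t) (hi t)} a i ≠ ∑_{i ∈ Finset.Ico (lo t) (hi t)} b i. In particular, a (lo T) ≠ b (lo T). -/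
/-!
Run the protocol itself: halve the current interval, keep the lower half if the two sums
still disagree there and the upper half otherwise. Since sums over consecutive intervals
add up, disagreement on an interval forces disagreement on the half that is kept. Each
round at most halves the length (rounding up), so after `⌈log₂ k⌉` rounds the interval has
length at most one, and length exactly one because an empty interval cannot disagree.
-/

open Finset

namespace MatchDescent

variable {M : Type*} [AddCommMonoid M] (a b : ℕ → M)

/-- Rounds up: of `[p.1, halfPoint p)` and `[halfPoint p, p.2)`, the lower half is the longer. -/
def halfPoint (p : ℕ × ℕ) : ℕ := p.1 + (p.2 - p.1 + 1) / 2

def Disagree (p : ℕ × ℕ) : Prop := ∑ i ∈ Ico p.1 p.2, a i ≠ ∑ i ∈ Ico p.1 p.2, b i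

open Classical in
noncomputable def halve (p : ℕ × ℕ) : ℕ × ℕ :=
  if Disagree a b (p.1, halfPoint p) then (p.1, halfPoint p) else (halfPoint p, p.2)

variable {a b}

theorem Disagree.lt {p : ℕ × ℕ} (hp : Disagree a b p) : p.1 < p.2 := by
  by_contra! hle
  exact hp (by simp [Ico_eq_empty_of_le hle])

theorem Disagree.of_split {l m h : ℕ} (hlm : l ≤ m) (hmh : m ≤ h) (hp : Disagree a b (l, h)) :
    Disagree a b (l, m) ∨ Disagree a b (m, h) := by
  by_contra! hc
  obtain ⟨hlow, hhigh⟩ := hc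
  refine hp ?_
  simp only [Disagree, ne_eq, not_not] at hlow hhigh ⊢
  rw [← sum_Ico_consecutive a hlm hmh, ← sum_Ico_consecutive b hlm hmh, hlow, hhigh]

theorem disagree_halve {p : ℕ × ℕ} (hp : Disagree a b p) : Disagree a b (halve a b p) := by
  unfold MatchDescent.halve
  split_ifs with hlow
  · exact hlow
  · have hsplit := Disagree.of_split (m := halfPoint p)
      (by unfold halfPoint; omega) (by unfold halfPoint; have := hp.lt; omega) hp
    exact hsplit.resolve_left hlow

theorem disagree_iterate_halve {p : ℕ × ℕ} (hp : Disagree a b p) (t : ℕ) :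
    Disagree a b ((halve a b)^[t] p) := by
  induction t with
  | zero => exact hp
  | succ t ih => rw [Function.iterate_succ_apply']; exact disagree_halve ih

theorem halve_eq_or (p : ℕ × ℕ) :
    halve a b p = (p.1, halfPoint p) ∨ halve a b p = (halfPoint p, p.2) := by
  unfold halve
  split_ifs
  · exact Or.inl rfl
  · exact Or.inr rfl

theorem length_halve_le (p : ℕ × ℕ) :
    (halve a b p).2 - (halve a b p).1 ≤ (p.2 - p.1 + 1) / 2 := by
  rcases halve_eq_or (a := a) (b := b) p with hp | hp <;>
    · rw [hp]
      simp only [halfPoint]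
      omega

theorem length_iterate_halve_le {c t : ℕ} {p : ℕ × ℕ} (hp : p.2 - p.1 ≤ 2 ^ (c + t)) :
    ((halve a b)^[t] p).2 - ((halve a b)^[t] p).1 ≤ 2 ^ c := by
  induction t generalizing p with
  | zero => exact hp
  | succ t ih =>
    rw [Function.iterate_succ_apply]
    apply ih
    have hhalf := length_halve_le (a := a) (b := b) p
    rw [← add_assoc, pow_succ] at hp
    omega

end MatchDescent

open MatchDescent in
theorem match_descent_general {M : Type*} [AddCommMonoid M] (k : ℕ) (a b : ℕ → M)
    (h : ∑ i ∈ Finset.Ico 0 k, a i ≠ ∑ i ∈ Finset.Ico 0 k, b i) :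
    ∃ T ≤ Nat.clog 2 k, ∃ lo hi : ℕ → ℕ,
      lo 0 = 0 ∧ hi 0 = k ∧ hi T = lo T + 1 ∧
      (∀ t < T,
        (lo (t + 1) = lo t ∧ hi (t + 1) = lo t + (hi t - lo t + 1) / 2) ∨
        (lo (t + 1) = lo t + (hi t - lo t + 1) / 2 ∧ hi (t + 1) = hi t)) ∧
      (∀ t ≤ T,
        ∑ i ∈ Finset.Ico (lo t) (hi t), a i ≠ ∑ i ∈ Finset.Ico (lo t) (hi t), b i) ∧
      a (lo T) ≠ b (lo T) := by
  set T := Nat.clog 2 k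
  set I : ℕ → ℕ × ℕ := fun t => (halve a b)^[t] (0, k)
  have hdis : ∀ t, Disagree a b (I t) := disagree_iterate_halve h
  have hlast : (I T).2 = (I T).1 + 1 := by
    have hlen : (I T).2 - (I T).1 ≤ 1 :=
      length_iterate_halve_le (c := 0) (by simpa using Nat.le_pow_clog one_lt_two k)
    have hnonempty := (hdis T).lt
    omega
  refine ⟨T, le_rfl, fun t => (I t).1, fun t => (I t).2, rfl, rfl, hlast,
    fun t _ => ?_, fun t _ => hdis t, ?_⟩
  · simp only [I, Function.iterate_succ_apply']
    rcases halve_eq_or (a := a) (b := b) (I t) with hstep | hstep <;> rw [hstep]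
    · exact Or.inl ⟨rfl, rfl⟩
    · exact Or.inr ⟨rfl, rfl⟩
  · simpa [Disagree, hlast] using hdis T

/-- Correctness and round complexity of a match between two workers: starting from two
disagreeing sums of `k` partial gradients, a binary descent of length `T ≤ ⌈log₂ k⌉`
through nested halved intervals, maintaining disagreement on every interval sum,
terminates at a single index on which the two workers' claimed values differ. -/
theorem match_descent {M : Type*} [AddCommMonoid M] (k : ℕ) (hk : 1 ≤ k) (a b : ℕ → M)
    (h : ∑ i ∈ Finset.Ico 0 k, a i ≠ ∑ i ∈ Finset.Ico 0 k, b i) :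
    ∃ T ≤ Nat.clog 2 k, ∃ lo hi : ℕ → ℕ,
      lo 0 = 0 ∧ hi 0 = k ∧ hi T = lo T + 1 ∧
      (∀ t < T,
        (lo (t + 1) = lo t ∧ hi (t + 1) = lo t + (hi t - lo t + 1) / 2) ∨
        (lo (t + 1) = lo t + (hi t - lo t + 1) / 2 ∧ hi (t + 1) = hi t)) ∧
      (∀ t ≤ T,
        ∑ i ∈ Finset.Ico (lo t) (hi t), a i ≠ ∑ i ∈ Finset.Ico (lo t) (hi t), b i) ∧
      a (lo T) ≠ b (lo T) :=
  match_descent_general k a b h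
end

section
/- Let s, u, q be natural numbers with 1 ≤ u ≤ s and q ≥ 2, and let c = s / u (natural-number division, i.e. c = ⌊s/u⌋, so c ≥ 1). Then the sequence n ↦ ((s + 1 − u) · (2 · ⌈Real.logb 2 n⌉ + (s + 3u) / (2 · Real.logb 2 q))) / Real.logb q (Nat.choose n c) tends to 2 · Real.logb 2 q · (s + 1 − u) / c as n → ∞ (along the atTop filter on ℕ). -/
/-!
Divide numerator and denominator by `log n`. Since `⌈log₂ n⌉` differs from `log n / log 2` by
less than one, the numerator over `log n` tends to `2 (s+1-u) / log 2`. The bounds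
`(n/2)^c / c! ≤ C(n, c) ≤ n^c` (for `n ≥ 2c`) pin `log C(n, c)` within a constant of `c log n`,
so `log_q C(n, c) / log n → c / log q`.
-/

open Filter Topology Real
open scoped Nat

lemma tendsto_log_natCast_atTop : Tendsto (fun n : ℕ => log n) atTop atTop :=
  tendsto_log_atTop.comp tendsto_natCast_atTop_atTop

lemma tendsto_div_of_eventually_abs_sub_mul_le {α : Type*} {l : Filter α} {f g : α → ℝ}
    {a C : ℝ} (hg : Tendsto g l atTop) (hfg : ∀ᶠ x in l, |f x - a * g x| ≤ C) :
    Tendsto (fun x => f x / g x) l (𝓝 a) := by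
  have herr : Tendsto (fun x => (f x - a * g x) / g x) l (𝓝 0) := by
    refine squeeze_zero_norm' ?_ ((tendsto_const_nhds (x := C)).div_atTop hg)
    filter_upwards [hfg, hg.eventually_gt_atTop 0] with x hx hgx
    rw [norm_div, Real.norm_of_nonneg hgx.le]
    gcongr
    exact hx
  refine ((tendsto_const_nhds (x := a)).add herr).congr' ?_ |>.trans (by rw [add_zero])
  filter_upwards [hg.eventually_gt_atTop 0] with x hgx
  field_simp
  ring

lemma tendsto_ceil_logb_div_log (b : ℝ) :
    Tendsto (fun x => (⌈logb b x⌉ : ℝ) / log x) atTop (𝓝 (log b)⁻¹) := by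
  refine tendsto_div_of_eventually_abs_sub_mul_le (C := 1) tendsto_log_atTop
    (Eventually.of_forall fun x => ?_)
  rw [inv_mul_eq_div, ← Real.logb, abs_le]
  constructor <;> linarith [Int.le_ceil (logb b x), Int.ceil_lt_add_one (logb b x)]

lemma log_choose_le_mul_log (n c : ℕ) : log (n.choose c) ≤ c * log n := by
  rcases (n.choose c).eq_zero_or_pos with h | h
  · rw [h, Nat.cast_zero, Real.log_zero]
    exact mul_nonneg c.cast_nonneg (log_natCast_nonneg n)
  · rw [← Real.log_pow]
    exact Real.log_le_log (by exact_mod_cast h) (by exact_mod_cast n.choose_le_pow c)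

lemma half_pow_div_factorial_le_choose {n c : ℕ} (h : 2 * c ≤ n) :
    ((n : ℝ) / 2) ^ c / c ! ≤ n.choose c := by
  refine le_trans ?_ (Nat.pow_le_choose c n)
  have hhalf : (n : ℝ) / 2 ≤ ((n + 1 - c : ℕ) : ℝ) := by
    rw [Nat.cast_sub (by omega)]
    push_cast
    have : (2 * c : ℝ) ≤ n := by exact_mod_cast h
    linarith
  gcongr

lemma abs_log_choose_sub_mul_log_le {n c : ℕ} (h : 2 * c ≤ n) (hn : n ≠ 0) :
    |log (n.choose c) - c * log n| ≤ c * log 2 + log c ! := by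
  have hlower : c * (log n - log 2) - log c ! ≤ log (n.choose c) := by
    have hpos : 0 < ((n : ℝ) / 2) ^ c / c ! := by positivity
    have := Real.log_le_log hpos (half_pow_div_factorial_le_choose h)
    rwa [Real.log_div (by positivity) (by positivity), Real.log_pow,
      Real.log_div (by positivity) two_ne_zero] at this
  rw [abs_le]
  constructor
  · linarith
  · linarith [log_choose_le_mul_log n c, log_natCast_nonneg c !,
      mul_nonneg c.cast_nonneg (Real.log_pos one_lt_two).le]

lemma tendsto_log_choose_div_log (c : ℕ) :
    Tendsto (fun n : ℕ => log (n.choose c) / log n) atTop (𝓝 c) :=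
  tendsto_div_of_eventually_abs_sub_mul_le tendsto_log_natCast_atTop <| by
    filter_upwards [eventually_ge_atTop (2 * c), eventually_ne_atTop 0] with n h hn
    exact abs_log_choose_sub_mul_log_le h hn

theorem comm_overhead_ratio_tendsto_general (s u q : ℕ) (hu1 : 1 ≤ u) (hus : u ≤ s)
    (c : ℕ) (hc : c = s / u) :
    Tendsto (fun n : ℕ =>
        (((s : ℝ) + 1 - u) * (2 * (⌈Real.logb 2 n⌉ : ℝ) +
          ((s : ℝ) + 3 * u) / (2 * Real.logb 2 q))) /
        Real.logb q (Nat.choose n c)) atTop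
      (nhds (2 * Real.logb 2 q * ((s : ℝ) + 1 - u) / c)) := by
  set A : ℝ := (s : ℝ) + 1 - u
  set K : ℝ := ((s : ℝ) + 3 * u) / (2 * Real.logb 2 q)
  have hc0 : (c : ℝ) ≠ 0 := by
    rw [hc, Nat.cast_ne_zero, ← Nat.pos_iff_ne_zero]
    exact Nat.div_pos hus hu1
  have hnum : Tendsto (fun n : ℕ => A * log q * (2 * ((⌈logb 2 n⌉ : ℝ) / log n) + K / log n))
      atTop (𝓝 (A * log q * (2 * (log 2)⁻¹ + 0))) :=
    ((((tendsto_ceil_logb_div_log 2).comp tendsto_natCast_atTop_atTop).const_mul 2).add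
      (tendsto_const_nhds.div_atTop tendsto_log_natCast_atTop)).const_mul _
  have hlimit : 2 * logb 2 q * A / c = A * log q * (2 * (log 2)⁻¹ + 0) / c := by
    rw [Real.logb]
    ring
  rw [hlimit]
  refine (hnum.div (tendsto_log_choose_div_log c) hc0).congr' ?_
  filter_upwards [tendsto_log_natCast_atTop.eventually_ne_atTop 0] with n hn
  symm
  calc A * (2 * ⌈logb 2 n⌉ + K) / logb q (n.choose c)
      = A * (2 * ⌈logb 2 n⌉ + K) * log q / log (n.choose c) := div_div_eq_mul_div _ _ _
    _ = (A * (2 * ⌈logb 2 n⌉ + K) * log q / log n) / (log (n.choose c) / log n) :=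
        (div_div_div_cancel_right₀ hn _ _).symm
    _ = _ := by
        rw [Pi.div_apply]
        congr 1
        field_simp

/-- Asymptotic ratio of the achievable communication overhead of the proposed `s`-BGC
scheme to the converse bound: with `c = ⌊s/u⌋`,
`(s+1-u)(2⌈log₂ n⌉ + (s+3u)/(2 log₂ q)) / log_q C(n, c) → 2 log₂(q) (s+1-u)/c`. -/
theorem comm_overhead_ratio_tendsto (s u q : ℕ) (hu1 : 1 ≤ u) (hus : u ≤ s) (hq : 2 ≤ q)
    (c : ℕ) (hc : c = s / u) :
    Tendsto (fun n : ℕ =>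
        (((s : ℝ) + 1 - u) * (2 * (⌈Real.logb 2 n⌉ : ℝ) +
          ((s : ℝ) + 3 * u) / (2 * Real.logb 2 q))) /
        Real.logb q (Nat.choose n c)) atTop
      (nhds (2 * Real.logb 2 q * ((s : ℝ) + 1 - u) / c)) :=
  comm_overhead_ratio_tendsto_general s u q hu1 hus c hc
end
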